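/- arXiv:2110.07015 — 2 statements merged into one kernel-verified Lean document; each statement's English description precedes it below -/
import Mathlib

section
/- Suppose that the sequence (x_k)_{k∈ℕ} is bounded, that ξ_k ≤ 1 for every k ∈ ℕ, that ∑_k |α_k| < ∞, ∑_k |1 − β_k − γ_k| < ∞ and ∑_k ‖δ_k e_k‖ < ∞, and that γ_k → 1. Then: (1) x_k − J_{c_k}(x_k) → 0 strongly; (2) if moreover inf_{k∈ℕ} c_k > 0 or c_k → ∞, then Ω is nonempty and Ω ⊆ zer A (in particular zer A ≠ ∅). -/
/-!
Write `y_k = J_{c_k} x_k` and `a_k = x_k - y_k`, so that `a_k / c_k ∈ A y_k` and, after absorbing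
the summable terms into an error `w_k`, `x_{k+1} = x_k - γ_k a_k + w_k`. Once `γ_k ∈ [ε, 2 - ε]`,
expanding `‖x_{k+1}‖²` gives `ε² ‖a_k‖² + 2 γ_k ⟪y_k, a_k⟫ ≤ ‖x_k‖² - ‖x_{k+1}‖² + O(‖w_k‖)`.
The cross terms are bounded below without knowing a zero of `A`: summing the monotonicity
inequalities over all pairs `k, l` with weights `g_k = γ_k c_k` gives
`(∑ g) ∑ g_k ⟪y_k, u_k⟫ ≥ ⟪∑ g_k y_k, ∑ g_k u_k⟫`, and `∑ g_k u_k = ∑ γ_k a_k` telescopes to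
`x_0 - x_n + ∑ w_k`, which is bounded. Hence `∑ ‖a_k‖² < ∞`.

For the second part, `a_k / c_k → 0` under either assumption on `c`; a bounded sequence has a
weakly convergent subsequence (sequential Banach–Alaoglu in its closed span, which is separable);
and the graph of a maximally monotone operator is closed under weak × strong limits.
-/

open Filter InnerProductSpace

/-- `z` is a weak sequential cluster point of the sequence `y`: some subsequence of `y`
converges weakly to `z`. -/
def WSeqClusterPt {H : Type*} [NormedAddCommGroup H] [InnerProductSpace ℝ H]
    (y : ℕ → H) (z : H) : Prop :=
  ∃ φ : ℕ → ℕ, StrictMono φ ∧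
    ∀ w : H, Tendsto (fun k => ⟪y (φ k), w⟫_ℝ) atTop (nhds ⟪z, w⟫_ℝ)

open Bornology Set Topology

section

variable {H : Type*} [NormedAddCommGroup H] [InnerProductSpace ℝ H]

theorem inner_sum_smul_le_sum_mul_sum_inner {ι : Type*} (s : Finset ι) {g : ι → ℝ} {y u : ι → H}
    (hg : ∀ i ∈ s, 0 ≤ g i) (hmono : ∀ i ∈ s, ∀ j ∈ s, 0 ≤ ⟪y i - y j, u i - u j⟫_ℝ) :
    ⟪∑ i ∈ s, g i • y i, ∑ i ∈ s, g i • u i⟫_ℝ ≤ (∑ i ∈ s, g i) * ∑ i ∈ s, g i * ⟪y i, u i⟫_ℝ := by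
  set F : ι → ι → ℝ := fun i j => g i * g j * ⟪y i, u i - u j⟫_ℝ
  have hsplit (i j : ι) : g i * g j * ⟪y i - y j, u i - u j⟫_ℝ = F i j + F j i := by
    simp only [F, inner_sub_left, inner_sub_right]; ring
  have hF : ∑ i ∈ s, ∑ j ∈ s, F i j =
      (∑ i ∈ s, g i) * ∑ i ∈ s, g i * ⟪y i, u i⟫_ℝ - ⟪∑ i ∈ s, g i • y i, ∑ i ∈ s, g i • u i⟫_ℝ := by
    simp only [F, inner_sub_right, mul_sub, Finset.sum_sub_distrib, sum_inner, inner_sum,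
      real_inner_smul_left, real_inner_smul_right, Finset.sum_mul, Finset.mul_sum]
    congr 1
    · exact Finset.sum_congr rfl fun _ _ => Finset.sum_congr rfl fun _ _ => by ring
    · rw [Finset.sum_comm]
      exact Finset.sum_congr rfl fun _ _ => Finset.sum_congr rfl fun _ _ => by ring
  have hnonneg : 0 ≤ ∑ i ∈ s, ∑ j ∈ s, (F i j + F j i) :=
    Finset.sum_nonneg fun i hi => Finset.sum_nonneg fun j hj => hsplit i j ▸
      mul_nonneg (mul_nonneg (hg i hi) (hg j hj)) (hmono i hi j hj)
  simp only [Finset.sum_add_distrib] at hnonneg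
  rw [Finset.sum_comm (f := fun i j => F j i)] at hnonneg
  linarith

theorem neg_mul_le_sum_mul_inner {ι : Type*} (s : Finset ι) {g : ι → ℝ} {y u : ι → H} {M C : ℝ}
    (hg : ∀ i ∈ s, 0 ≤ g i) (hmono : ∀ i ∈ s, ∀ j ∈ s, 0 ≤ ⟪y i - y j, u i - u j⟫_ℝ)
    (hM : 0 ≤ M) (hy : ∀ i ∈ s, ‖y i‖ ≤ M) (hC : ‖∑ i ∈ s, g i • u i‖ ≤ C) :
    -(M * C) ≤ ∑ i ∈ s, g i * ⟪y i, u i⟫_ℝ := by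
  set σ := ∑ i ∈ s, g i
  have hP : ‖∑ i ∈ s, g i • y i‖ ≤ σ * M :=
    calc ‖∑ i ∈ s, g i • y i‖ ≤ ∑ i ∈ s, ‖g i • y i‖ := norm_sum_le _ _
      _ ≤ ∑ i ∈ s, g i * M := Finset.sum_le_sum fun i hi => by
          rw [norm_smul, Real.norm_of_nonneg (hg i hi)]
          exact mul_le_mul_of_nonneg_left (hy i hi) (hg i hi)
      _ = σ * M := (Finset.sum_mul _ _ _).symm
  have hPQ : -(σ * (M * C)) ≤ ⟪∑ i ∈ s, g i • y i, ∑ i ∈ s, g i • u i⟫_ℝ := by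
    have hCS := neg_le_of_abs_le (abs_real_inner_le_norm (∑ i ∈ s, g i • y i) (∑ i ∈ s, g i • u i))
    have := mul_le_mul hP hC (norm_nonneg _) ((norm_nonneg _).trans hP)
    linarith
  have hcheb := inner_sum_smul_le_sum_mul_sum_inner s hg hmono
  rcases (Finset.sum_nonneg hg).eq_or_lt with hσ | hσ
  · have hg0 : ∀ i ∈ s, g i = 0 := (Finset.sum_eq_zero_iff_of_nonneg hg).1 hσ.symm
    rw [Finset.sum_eq_zero fun i hi => by rw [hg0 i hi, zero_mul]]
    exact neg_nonpos.2 (mul_nonneg hM ((norm_nonneg _).trans hC))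
  · exact le_of_mul_le_mul_left (by linarith) hσ

theorem sq_norm_sub_sq_norm_le {E : Type*} [SeminormedAddCommGroup E] (a b : E) :
    ‖a‖ ^ 2 - ‖b‖ ^ 2 ≤ ‖a - b‖ * (‖a‖ + ‖b‖) := by
  rw [sq_sub_sq, mul_comm]
  exact mul_le_mul_of_nonneg_right (norm_sub_norm_le a b) (by positivity)

theorem norm_sub_smul_sub_sq (x y : H) (γ : ℝ) :
    ‖x - γ • (x - y)‖ ^ 2 = ‖x‖ ^ 2 - γ * (2 - γ) * ‖x - y‖ ^ 2 - 2 * γ * ⟪y, x - y⟫_ℝ := by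
  have hx : ⟪x, x - y⟫_ℝ = ⟪y, x - y⟫_ℝ + ‖x - y‖ ^ 2 := by
    rw [← real_inner_self_eq_norm_sq, ← inner_add_left, add_sub_cancel]
  rw [@norm_sub_sq_real, real_inner_smul_right, norm_smul, mul_pow, Real.norm_eq_abs, sq_abs, hx]
  ring

theorem relaxed_step_energy_le {x y w : H} {γ ε : ℝ} (hε : 0 ≤ ε) (hγ : γ ∈ Icc ε (2 - ε)) :
    ε ^ 2 * ‖x - y‖ ^ 2 + 2 * γ * ⟪y, x - y⟫_ℝ ≤
      ‖x‖ ^ 2 - ‖x - γ • (x - y) + w‖ ^ 2 +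
        ‖w‖ * (‖x - γ • (x - y) + w‖ + ‖x - γ • (x - y)‖) := by
  have hperturb := sq_norm_sub_sq_norm_le (x - γ • (x - y) + w) (x - γ • (x - y))
  rw [add_sub_cancel_left] at hperturb
  have hγε : ε ^ 2 ≤ γ * (2 - γ) := by nlinarith [hγ.1, hγ.2]
  have := mul_le_mul_of_nonneg_right hγε (sq_nonneg ‖x - y‖)
  linarith [norm_sub_smul_sub_sq x y γ]

theorem neg_mul_le_sum_mul_inner_of_relaxed_step {x y u w : ℕ → H} {c γ : ℕ → ℝ} {M N : ℝ}
    (hmono : ∀ k l, 0 ≤ ⟪y k - y l, u k - u l⟫_ℝ) (hc : ∀ k, 0 ≤ c k)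
    (hxy : ∀ k, x k - y k = c k • u k) (hγ : ∀ k, 0 ≤ γ k)
    (hrec : ∀ k, x (k + 1) = x k - γ k • (x k - y k) + w k)
    (hM : ∀ k, ‖x k‖ ≤ M) (hN : 0 ≤ N) (hy : ∀ k, ‖y k‖ ≤ N) (n : ℕ) :
    -(N * (2 * M + ∑ k ∈ Finset.range n, ‖w k‖)) ≤
      ∑ k ∈ Finset.range n, γ k * ⟪y k, x k - y k⟫_ℝ := by
  have htel : ∑ k ∈ Finset.range n, (γ k * c k) • u k =
      x 0 - x n + ∑ k ∈ Finset.range n, w k := by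
    rw [← Finset.sum_range_sub', ← Finset.sum_add_distrib]
    refine Finset.sum_congr rfl fun k _ => ?_
    rw [mul_smul, ← hxy, hrec]
    abel
  have hQ : ‖∑ k ∈ Finset.range n, (γ k * c k) • u k‖ ≤ 2 * M + ∑ k ∈ Finset.range n, ‖w k‖ := by
    rw [htel]
    linarith [norm_add_le (x 0 - x n) (∑ k ∈ Finset.range n, w k), norm_sub_le (x 0) (x n),
      norm_sum_le (Finset.range n) w, hM 0, hM n]
  simpa only [hxy, real_inner_smul_right, mul_assoc] using
    neg_mul_le_sum_mul_inner (Finset.range n) (fun k _ => mul_nonneg (hγ k) (hc k))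
      (fun k _ l _ => hmono k l) hN (fun k _ => hy k) hQ

theorem norm_sub_le_of_relaxed_step {x x' y w : H} {γ ε M : ℝ} (hε : 0 < ε) (hγ : ε ≤ γ)
    (hrec : x' = x - γ • (x - y) + w) (hx : ‖x‖ ≤ M) (hx' : ‖x'‖ ≤ M) :
    ‖x - y‖ ≤ (2 * M + ‖w‖) / ε := by
  rw [le_div_iff₀ hε]
  calc ‖x - y‖ * ε ≤ ‖γ • (x - y)‖ := by
        rw [norm_smul, Real.norm_of_nonneg (hε.le.trans hγ), mul_comm]
        exact mul_le_mul_of_nonneg_right hγ (norm_nonneg _)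
    _ = ‖x - x' + w‖ := by rw [hrec]; congr 1; abel
    _ ≤ 2 * M + ‖w‖ := by linarith [norm_add_le (x - x') w, norm_sub_le x x']

theorem tendsto_sub_nhds_zero_of_relaxed_step {x y u w : ℕ → H} {c γ : ℕ → ℝ} {ε : ℝ}
    (hmono : ∀ k l, 0 ≤ ⟪y k - y l, u k - u l⟫_ℝ) (hc : ∀ k, 0 ≤ c k)
    (hxy : ∀ k, x k - y k = c k • u k) (hε : 0 < ε) (hγ : ∀ k, γ k ∈ Icc ε (2 - ε))
    (hrec : ∀ k, x (k + 1) = x k - γ k • (x k - y k) + w k)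
    (hx : IsBounded (range x)) (hw : Summable fun k => ‖w k‖) :
    Tendsto (fun k => x k - y k) atTop (𝓝 0) := by
  obtain ⟨M, hxM⟩ := isBounded_iff_forall_norm_le.mp hx
  have hM (k : ℕ) : ‖x k‖ ≤ M := hxM _ ⟨k, rfl⟩
  have hM0 : 0 ≤ M := (norm_nonneg _).trans (hM 0)
  set W := ∑' k, ‖w k‖
  have hwW (n : ℕ) : ∑ k ∈ Finset.range n, ‖w k‖ ≤ W :=
    hw.sum_le_tsum _ fun _ _ => norm_nonneg _
  have hwk (k : ℕ) : ‖w k‖ ≤ W := hw.le_tsum k fun _ _ => norm_nonneg _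
  have hW0 : 0 ≤ W := (norm_nonneg _).trans (hwk 0)
  have hxy_bound (k : ℕ) : ‖x k - y k‖ ≤ (2 * M + W) / ε :=
    (norm_sub_le_of_relaxed_step hε (hγ k).1 (hrec k) (hM k) (hM (k + 1))).trans
      (by gcongr; exact hwk k)
  set N := M + (2 * M + W) / ε
  have hy (k : ℕ) : ‖y k‖ ≤ N :=
    calc ‖y k‖ = ‖x k - (x k - y k)‖ := by rw [sub_sub_cancel]
      _ ≤ N := (norm_sub_le _ _).trans (add_le_add (hM k) (hxy_bound k))
  have hN : 0 ≤ N := (norm_nonneg _).trans (hy 0)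
  have henergy (k : ℕ) : ε ^ 2 * ‖x k - y k‖ ^ 2 + 2 * (γ k * ⟪y k, x k - y k⟫_ℝ) ≤
      ‖x k‖ ^ 2 - ‖x (k + 1)‖ ^ 2 + (2 * M + W) * ‖w k‖ := by
    have h := relaxed_step_energy_le (x := x k) (y := y k) (w := w k) hε.le (hγ k)
    rw [← hrec k, show x k - γ k • (x k - y k) = x (k + 1) - w k by rw [hrec k]; abel] at h
    have hsum : ‖x (k + 1)‖ + ‖x (k + 1) - w k‖ ≤ 2 * M + W := by
      linarith [norm_sub_le (x (k + 1)) (w k), hM (k + 1), hwk k]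
    linarith [mul_le_mul_of_nonneg_left hsum (norm_nonneg (w k))]
  have hbound (n : ℕ) : ∑ k ∈ Finset.range n, ‖x k - y k‖ ^ 2 ≤
      (M ^ 2 + (2 * M + W) * W + 2 * (N * (2 * M + W))) / ε ^ 2 := by
    rw [le_div_iff₀ (by positivity), mul_comm]
    have h := Finset.sum_le_sum fun k (_ : k ∈ Finset.range n) => henergy k
    simp only [Finset.sum_add_distrib, Finset.sum_range_sub' (fun k => ‖x k‖ ^ 2),
      ← Finset.mul_sum] at h
    have hlower := neg_mul_le_sum_mul_inner_of_relaxed_step hmono hc hxy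
      (fun k => hε.le.trans (hγ k).1) hrec hM hN hy n
    have hx0 : ‖x 0‖ ^ 2 ≤ M ^ 2 := pow_le_pow_left₀ (norm_nonneg _) (hM 0) 2
    have hw2 := mul_le_mul_of_nonneg_left (hwW n) (by linarith : 0 ≤ 2 * M + W)
    have hwN := mul_le_mul_of_nonneg_left (hwW n) hN
    linarith [sq_nonneg ‖x n‖]
  have hsq : Tendsto (fun k => ‖x k - y k‖ ^ 2) atTop (𝓝 0) :=
    (summable_of_sum_range_le (fun _ => sq_nonneg _) hbound).tendsto_atTop_zero
  exact tendsto_zero_iff_norm_tendsto_zero.2 (by simpa using hsq.sqrt)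

theorem tendsto_sub_nhds_zero_of_eventually_relaxed_step {x y u w : ℕ → H} {c γ : ℕ → ℝ}
    {ε : ℝ} (hmono : ∀ k l, 0 ≤ ⟪y k - y l, u k - u l⟫_ℝ) (hc : ∀ k, 0 ≤ c k)
    (hxy : ∀ k, x k - y k = c k • u k) (hε : 0 < ε) (hγ : ∀ᶠ k in atTop, γ k ∈ Icc ε (2 - ε))
    (hrec : ∀ k, x (k + 1) = x k - γ k • (x k - y k) + w k)
    (hx : IsBounded (range x)) (hw : Summable fun k => ‖w k‖) :
    Tendsto (fun k => x k - y k) atTop (𝓝 0) := by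
  obtain ⟨K, hK⟩ := eventually_atTop.1 hγ
  rw [← tendsto_add_atTop_iff_nat K]
  exact tendsto_sub_nhds_zero_of_relaxed_step (x := fun k => x (k + K)) (y := fun k => y (k + K))
    (u := fun k => u (k + K)) (w := fun k => w (k + K)) (γ := fun k => γ (k + K))
    (fun k l => hmono _ _) (fun k => hc _) (fun k => hxy _) hε
    (fun k => hK _ (Nat.le_add_left _ _)) (fun k => by rw [Nat.add_right_comm]; exact hrec _)
    (hx.subset (range_comp_subset_range _ x)) ((summable_nat_add_iff K).2 hw)

theorem mem_of_tendsto_inner_of_tendsto {A : H → Set H}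
    (hmono : ∀ x y xu yv : H, xu ∈ A x → yv ∈ A y → 0 ≤ ⟪x - y, xu - yv⟫_ℝ)
    (hmax : ∀ x xu : H, (∀ y yv : H, yv ∈ A y → 0 ≤ ⟪x - y, xu - yv⟫_ℝ) → xu ∈ A x)
    {y v : ℕ → H} {z w : H} (hv : ∀ k, v k ∈ A (y k)) (hy : IsBounded (range y))
    (hyz : ∀ p, Tendsto (fun k => ⟪y k, p⟫_ℝ) atTop (𝓝 ⟪z, p⟫_ℝ))
    (hvw : Tendsto v atTop (𝓝 w)) :
    w ∈ A z := by
  obtain ⟨M, hyM⟩ := isBounded_iff_forall_norm_le.mp hy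
  refine hmax z w fun y' v' hv' => ?_
  have hnull : Tendsto (fun k => ⟪y k - y', v k - w⟫_ℝ) atTop (𝓝 0) := by
    refine squeeze_zero_norm (fun k => ?_)
      (by simpa using (tendsto_iff_norm_sub_tendsto_zero.1 hvw).const_mul (M + ‖y'‖))
    rw [Real.norm_eq_abs]
    refine (abs_real_inner_le_norm _ _).trans (mul_le_mul_of_nonneg_right ?_ (norm_nonneg _))
    exact (norm_sub_le _ _).trans (add_le_add_left (hyM _ ⟨k, rfl⟩) _)
  have hlim : Tendsto (fun k => ⟪y k - y', v k - v'⟫_ℝ) atTop (𝓝 ⟪z - y', w - v'⟫_ℝ) := by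
    have hweak := (hyz (w - v')).sub_const ⟪y', w - v'⟫_ℝ
    simp only [← inner_sub_left] at hweak
    simpa [← inner_add_right] using hnull.add hweak
  exact ge_of_tendsto' hlim fun k => hmono _ _ _ _ (hv k) hv'

theorem zero_mem_of_wSeqClusterPt {A : H → Set H}
    (hmono : ∀ x y xu yv : H, xu ∈ A x → yv ∈ A y → 0 ≤ ⟪x - y, xu - yv⟫_ℝ)
    (hmax : ∀ x xu : H, (∀ y yv : H, yv ∈ A y → 0 ≤ ⟪x - y, xu - yv⟫_ℝ) → xu ∈ A x)
    {x y v : ℕ → H} {z : H} (hx : IsBounded (range x))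
    (hxy : Tendsto (fun k => x k - y k) atTop (𝓝 0)) (hv : ∀ k, v k ∈ A (y k))
    (hv0 : Tendsto v atTop (𝓝 0)) (hz : WSeqClusterPt x z) :
    0 ∈ A z := by
  obtain ⟨φ, hφ, hxz⟩ := hz
  have hxyφ := hxy.comp hφ.tendsto_atTop
  refine mem_of_tendsto_inner_of_tendsto hmono hmax (y := y ∘ φ) (fun k => hv _) ?_ (fun p => ?_)
    (hv0.comp hφ.tendsto_atTop)
  · refine (hx.sub (Metric.isBounded_range_of_tendsto _ hxyφ)).subset ?_
    rintro _ ⟨k, rfl⟩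
    exact ⟨x (φ k), ⟨φ k, rfl⟩, _, ⟨k, rfl⟩, sub_sub_cancel _ _⟩
  · simpa [inner_sub_left] using (hxz p).sub (hxyφ.inner (tendsto_const_nhds (x := p)))

theorem exists_wSeqClusterPt_of_isBounded [CompleteSpace H] {x : ℕ → H}
    (hx : IsBounded (range x)) : ∃ z, WSeqClusterPt x z := by
  obtain ⟨M, hM⟩ := isBounded_iff_forall_norm_le.mp hx
  set K : Submodule ℝ H := (Submodule.span ℝ (range x)).topologicalClosure
  have hxK (k : ℕ) : x k ∈ K :=
    (Submodule.span ℝ (range x)).le_topologicalClosure (Submodule.subset_span ⟨k, rfl⟩)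
  have : CompleteSpace K := (Submodule.isClosed_topologicalClosure _).completeSpace_coe
  have : TopologicalSpace.SeparableSpace K := by
    refine TopologicalSpace.IsSeparable.separableSpace ?_
    rw [Submodule.topologicalClosure_coe, TopologicalSpace.isSeparable_closure]
    exact (countable_range x).isSeparable.span
  let f : ℕ → WeakDual ℝ K := fun k => StrongDual.toWeakDual (toDual ℝ K ⟨x k, hxK k⟩)
  have hf (k : ℕ) : f k ∈ WeakDual.toStrongDual ⁻¹' Metric.closedBall 0 M := by
    refine (dist_zero_right (toDual ℝ K ⟨x k, hxK k⟩)).trans_le ?_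
    simpa [f] using hM _ ⟨k, rfl⟩
  obtain ⟨g, -, φ, hφ, hlim⟩ := WeakDual.isSeqCompact_closedBall ℝ K 0 M hf
  refine ⟨(toDual ℝ K).symm (WeakDual.toStrongDual g), φ, hφ, fun w => ?_⟩
  -- since `x k ∈ K`, testing against `w` is the same as testing against its projection onto `K`
  have := ((WeakDual.eval_continuous (K.orthogonalProjectionOnto w)).tendsto g).comp hlim
  convert this using 2 with k
  · simp [f]
  · rw [← Submodule.inner_orthogonalProjectionOnto_eq_of_mem_left, toDual_symm_apply]
    rfl

theorem tendsto_one_div_smul_nhds_zero {E : Type*} [NormedAddCommGroup E] [NormedSpace ℝ E]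
    {c : ℕ → ℝ} {a : ℕ → E} (hc : (∃ ε > (0 : ℝ), ∀ k, ε ≤ c k) ∨ Tendsto c atTop atTop)
    (ha : Tendsto a atTop (𝓝 0)) :
    Tendsto (fun k => (1 / c k) • a k) atTop (𝓝 0) := by
  refine IsBoundedUnder.smul_tendsto_zero ?_ ha
  rcases hc with ⟨ε, hε, hεc⟩ | hc
  · refine isBoundedUnder_of ⟨1 / ε, fun k => ?_⟩
    simp only [Function.comp_apply, norm_div, norm_one, Real.norm_of_nonneg
      (hε.le.trans (hεc k))]
    exact one_div_le_one_div_of_le hε (hεc k)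
  · simp only [one_div]
    exact (tendsto_inv_atTop_zero.comp hc).norm.isBoundedUnder_le

theorem summable_norm_smul_add_smul_add_smul {u : H} {x e : ℕ → H} {α β γ δ : ℕ → ℝ}
    (hx : IsBounded (range x)) (hα : Summable fun k => |α k|)
    (hβγ : Summable fun k => |1 - β k - γ k|) (hδe : Summable fun k => ‖δ k • e k‖) :
    Summable fun k => ‖α k • u + (β k + γ k - 1) • x k + δ k • e k‖ := by
  obtain ⟨M, hxM⟩ := isBounded_iff_forall_norm_le.mp hx
  refine .of_nonneg_of_le (fun _ => norm_nonneg _) (fun k => ?_)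
    (((hα.mul_right ‖u‖).add (hβγ.mul_right M)).add hδe)
  calc ‖α k • u + (β k + γ k - 1) • x k + δ k • e k‖
      ≤ ‖α k • u‖ + ‖(β k + γ k - 1) • x k‖ + ‖δ k • e k‖ := norm_add₃_le
    _ = |α k| * ‖u‖ + |1 - β k - γ k| * ‖x k‖ + ‖δ k • e k‖ := by
      rw [norm_smul, norm_smul, Real.norm_eq_abs, Real.norm_eq_abs, abs_sub_comm, ← sub_sub]
    _ ≤ |α k| * ‖u‖ + |1 - β k - γ k| * M + ‖δ k • e k‖ := by
      gcongr; exact hxM _ ⟨k, rfl⟩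

end

theorem stmt10_general {H : Type*} [NormedAddCommGroup H] [InnerProductSpace ℝ H] [CompleteSpace H]
    (A : H → Set H)
    (hmono : ∀ x y xu yv : H, xu ∈ A x → yv ∈ A y → 0 ≤ ⟪x - y, xu - yv⟫_ℝ)
    (hmax : ∀ x xu : H, (∀ y yv : H, yv ∈ A y → 0 ≤ ⟪x - y, xu - yv⟫_ℝ) → xu ∈ A x)
    (J : ℝ → H → H)
    (hJ : ∀ c : ℝ, 0 < c → ∀ x : H, (1 / c) • (x - J c x) ∈ A (J c x))
    (u : H) (e : ℕ → H) (c α β γ δ : ℕ → ℝ) (hc : ∀ k, 0 < c k)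
    (x : ℕ → H)
    (hrec : ∀ k, x (k + 1) = α k • u + β k • x k + γ k • J (c k) (x k) + δ k • e k)
    (hxbdd : Bornology.IsBounded (Set.range x))
    (hαsum : Summable (fun k => |α k|))
    (hβγsum : Summable (fun k => |1 - β k - γ k|))
    (hdesum : Summable (fun k => ‖δ k • e k‖))
    (hγ1 : Tendsto γ atTop (nhds 1)) :
    Tendsto (fun k => x k - J (c k) (x k)) atTop (nhds (0 : H)) ∧
      (((∃ ε > (0 : ℝ), ∀ k, ε ≤ c k) ∨ Tendsto c atTop atTop) →
        (∃ z : H, WSeqClusterPt x z) ∧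
          ∀ z : H, WSeqClusterPt x z → (0 : H) ∈ A z) := by
  have hrec' (k : ℕ) : x (k + 1) = x k - γ k • (x k - J (c k) (x k)) +
      (α k • u + (β k + γ k - 1) • x k + δ k • e k) := by
    rw [hrec]; module
  have hres : Tendsto (fun k => x k - J (c k) (x k)) atTop (𝓝 0) :=
    tendsto_sub_nhds_zero_of_eventually_relaxed_step
      (u := fun k => (1 / c k) • (x k - J (c k) (x k)))
      (fun k l => hmono _ _ _ _ (hJ _ (hc k) _) (hJ _ (hc l) _)) (fun k => (hc k).le)
      (fun k => by rw [smul_smul, mul_one_div_cancel (hc k).ne', one_smul])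
      (by norm_num : (0 : ℝ) < 1 / 2)
      (hγ1.eventually (Icc_mem_nhds (by norm_num) (by norm_num))) hrec' hxbdd
      (summable_norm_smul_add_smul_add_smul hxbdd hαsum hβγsum hdesum)
  refine ⟨hres, fun hcase => ⟨exists_wSeqClusterPt_of_isBounded hxbdd, fun z hz => ?_⟩⟩
  exact zero_mem_of_wSeqClusterPt hmono hmax hxbdd hres (fun k => hJ _ (hc k) _)
    (tendsto_one_div_smul_nhds_zero hcase hres) hz

/-- Proposition 3.6 (Rockafellar-type): if the iterates `(x_k)` of the generalized proximal
point algorithm are bounded, `ξ_k ≤ 1`, `∑|α_k| < ∞`, `∑|1-β_k-γ_k| < ∞`,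
`∑‖δ_k e_k‖ < ∞`, and `γ_k → 1`, then `x_k - J_{c_k}(x_k) → 0`; and if moreover
`inf c_k > 0` or `c_k → ∞`, the set of weak sequential cluster points of `(x_k)` is
nonempty and contained in `zer A`. -/
theorem stmt10 {H : Type*} [NormedAddCommGroup H] [InnerProductSpace ℝ H] [CompleteSpace H]
    (A : H → Set H)
    (hmono : ∀ x y xu yv : H, xu ∈ A x → yv ∈ A y → 0 ≤ ⟪x - y, xu - yv⟫_ℝ)
    (hmax : ∀ x xu : H, (∀ y yv : H, yv ∈ A y → 0 ≤ ⟪x - y, xu - yv⟫_ℝ) → xu ∈ A x)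
    (J : ℝ → H → H)
    (hJ : ∀ c : ℝ, 0 < c → ∀ x : H, (1 / c) • (x - J c x) ∈ A (J c x))
    (u : H) (e : ℕ → H) (c α β γ δ : ℕ → ℝ) (hc : ∀ k, 0 < c k)
    (x : ℕ → H)
    (hrec : ∀ k, x (k + 1) = α k • u + β k • x k + γ k • J (c k) (x k) + δ k • e k)
    (ξ : ℕ → ℝ) (hξ : ∀ k, ξ k = |β k + γ k / 2| + |γ k / 2|)
    (hxbdd : Bornology.IsBounded (Set.range x))
    (hξ1 : ∀ k, ξ k ≤ 1)
    (hαsum : Summable (fun k => |α k|))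
    (hβγsum : Summable (fun k => |1 - β k - γ k|))
    (hdesum : Summable (fun k => ‖δ k • e k‖))
    (hγ1 : Tendsto γ atTop (nhds 1)) :
    Tendsto (fun k => x k - J (c k) (x k)) atTop (nhds (0 : H)) ∧
      (((∃ ε > (0 : ℝ), ∀ k, ε ≤ c k) ∨ Tendsto c atTop atTop) →
        (∃ z : H, WSeqClusterPt x z) ∧
          ∀ z : H, WSeqClusterPt x z → (0 : H) ∈ A z) :=
  stmt10_general A hmono hmax J hJ u e c α β γ δ hc x hrec hxbdd hαsum hβγsum hdesum hγ1
end

section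
/- Suppose that zer A ≠ ∅ and that the sequence (x_k)_{k∈ℕ} is bounded; that either ∑_k |α_{k+1} − α_k| < ∞, or for every k, |γ_k| ≠ 1 and |α_{k+1} − α_k|/(1 − |γ_{k+1}|) → 0; that for every k, |γ_k| ∈ [0,1], with α_k + γ_k → 1, ∑_k (1 − |γ_k|) = ∞, and ∑_k |(α_{k+1} + γ_{k+1}) − (α_k + γ_k)| < ∞; that α_k → 0, ∑_k |β_k| < ∞, and ∑_k ‖δ_k e_k‖ < ∞; and that inf_{k∈ℕ} c_k > 0 and ∑_k |c_{k+1} − c_k| < ∞. Then x_k − J_{c_k}(x_k) → 0 strongly, Ω is nonempty, and Ω ⊆ zer A. -/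
/-!
Subtracting two consecutive steps of the iteration and using that each resolvent is
nonexpansive, while resolvents with parameters `c, c'` differ by at most
`|c' - c| / c * ‖x - J_c x‖`, gives
`‖x_{k+2} - x_{k+1}‖ ≤ |γ_{k+1}| ‖x_{k+1} - x_k‖ + (summable or negligible terms)`,
so Xu's lemma yields `x_{k+1} - x_k → 0`. Solving the recursion for `γ_k (x_k - J_{c_k} x_k)`
and using `γ_k → 1` then gives `x_k - J_{c_k} x_k → 0`.

Weak cluster points exist by sequential Banach–Alaoglu on the closed span of the iterates. Along
a subsequence converging weakly to `z`, the graph points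
`(J_{c_k} x_k, (x_k - J_{c_k} x_k) / c_k)` converge weakly × strongly to `(z, 0)`, and
maximal monotonicity closes the graph under such limits, so `0 ∈ A z`.
-/

open Filter InnerProductSpace

open Topology Finset

theorem le_of_mul_self_le_mul {a b : ℝ} (hb : 0 ≤ b) (h : a * a ≤ a * b) : a ≤ b := by
  nlinarith

theorem prod_le_exp_neg_sum_one_sub {ι : Type*} (s : Finset ι) {q : ι → ℝ}
    (hq : ∀ k ∈ s, 0 ≤ q k) : ∏ k ∈ s, q k ≤ Real.exp (-∑ k ∈ s, (1 - q k)) := by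
  rw [← sum_neg_distrib, Real.exp_sum]
  exact prod_le_prod hq fun k _ => by linarith [Real.add_one_le_exp (-(1 - q k))]

theorem tendsto_prod_Ico_zero_of_tendsto_sum_one_sub {q : ℕ → ℝ} (hq0 : ∀ k, 0 ≤ q k)
    (hdiv : Tendsto (fun n => ∑ k ∈ range n, (1 - q k)) atTop atTop) (N : ℕ) :
    Tendsto (fun n => ∏ k ∈ Ico N n, q k) atTop (𝓝 0) := by
  have hdivN : Tendsto (fun n => ∑ k ∈ Ico N n, (1 - q k)) atTop atTop := by
    refine (tendsto_atTop_add_const_right _ (-∑ k ∈ range N, (1 - q k)) hdiv).congr' ?_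
    filter_upwards [eventually_ge_atTop N] with n hn
    rw [sum_Ico_eq_sub _ hn, sub_eq_add_neg]
  refine squeeze_zero (fun n => prod_nonneg fun k _ => hq0 k)
    (fun n => prod_le_exp_neg_sum_one_sub _ fun k _ => hq0 k) ?_
  exact Real.tendsto_exp_atBot.comp (tendsto_neg_atTop_atBot.comp hdivN)

theorem le_mul_prod_Ico_add_sum_Ico {a q t σ : ℕ → ℝ} {N : ℕ} {ε : ℝ}
    (hq0 : ∀ k, 0 ≤ q k) (hq1 : ∀ k, q k ≤ 1) (hσ0 : ∀ k, 0 ≤ σ k)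
    (hrec : ∀ k, a (k + 1) ≤ q k * a k + (1 - q k) * t k + σ k)
    (hε : 0 ≤ ε) (ht : ∀ k ≥ N, t k ≤ ε) :
    ∀ n ≥ N, a n ≤ a N * ∏ k ∈ Ico N n, q k + ε + ∑ k ∈ Ico N n, σ k := by
  refine Nat.le_induction (by simpa using hε) fun n hn ih => ?_
  have hS : 0 ≤ ∑ k ∈ Ico N n, σ k := sum_nonneg fun k _ => hσ0 k
  have htn : (1 - q n) * t n ≤ (1 - q n) * ε :=
    mul_le_mul_of_nonneg_left (ht n hn) (sub_nonneg.2 (hq1 n))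
  have hqS : q n * ∑ k ∈ Ico N n, σ k ≤ ∑ k ∈ Ico N n, σ k :=
    mul_le_of_le_one_left hS (hq1 n)
  rw [prod_Ico_succ_top hn, sum_Ico_succ_top hn]
  calc a (n + 1) ≤ q n * a n + (1 - q n) * t n + σ n := hrec n
    _ ≤ q n * (a N * ∏ k ∈ Ico N n, q k + ε + ∑ k ∈ Ico N n, σ k) + (1 - q n) * ε + σ n := by
      gcongr
      exact hq0 n
    _ ≤ _ := by nlinarith

-- Xu's lemma
theorem tendsto_zero_of_le_mul_add {a q t σ : ℕ → ℝ} (ha0 : ∀ k, 0 ≤ a k)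
    (hq0 : ∀ k, 0 ≤ q k) (hq1 : ∀ k, q k ≤ 1) (hσ0 : ∀ k, 0 ≤ σ k)
    (hrec : ∀ k, a (k + 1) ≤ q k * a k + (1 - q k) * t k + σ k)
    (hdiv : Tendsto (fun n => ∑ k ∈ range n, (1 - q k)) atTop atTop)
    (ht : Tendsto t atTop (𝓝 0)) (hσ : Summable σ) :
    Tendsto a atTop (𝓝 0) := by
  refine tendsto_order.2 ⟨fun b hb => Eventually.of_forall fun k => hb.trans_le (ha0 k),
    fun b hb => ?_⟩
  obtain ⟨ε, hε, hεb⟩ : ∃ ε, 0 < ε ∧ 3 * ε < b := ⟨b / 4, by positivity, by linarith⟩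
  have htail : Tendsto (fun N => ∑' k, σ k - ∑ k ∈ range N, σ k) atTop (𝓝 0) := by
    simpa using (tendsto_const_nhds (x := ∑' k, σ k)).sub hσ.hasSum.tendsto_sum_nat
  obtain ⟨N, hN⟩ := ((ht.eventually (ge_mem_nhds hε)).and
    (htail.eventually (ge_mem_nhds hε))).exists_forall_of_atTop
  have hbound := le_mul_prod_Ico_add_sum_Ico hq0 hq1 hσ0 hrec hε.le fun k hk => (hN k hk).1
  have hprod := ((tendsto_prod_Ico_zero_of_tendsto_sum_one_sub hq0 hdiv N).const_mul
    (a N)).eventually (ge_mem_nhds (mul_zero (a N) ▸ hε))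
  filter_upwards [hprod, eventually_ge_atTop N] with n hn hNn
  have hsum : ∑ k ∈ Ico N n, σ k ≤ ε := by
    rw [sum_Ico_eq_sub _ hNn]
    linarith [hσ.sum_le_tsum (range n) fun k _ => hσ0 k, (hN N le_rfl).2]
  linarith [hbound n hNn]

section MonotoneOperators

variable {H : Type*} [NormedAddCommGroup H] [InnerProductSpace ℝ H]

def IsMonotoneOperator (A : H → Set H) : Prop :=
  ∀ x y u v : H, u ∈ A x → v ∈ A y → 0 ≤ ⟪x - y, u - v⟫_ℝ

def IsResolvent (A : H → Set H) (c : ℝ) (R : H → H) : Prop :=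
  ∀ x : H, (1 / c) • (x - R x) ∈ A (R x)

namespace IsResolvent

variable {A : H → Set H} {c c' : ℝ} {R R' : H → H}

theorem norm_sub_le (hA : IsMonotoneOperator A) (hR : IsResolvent A c R) (hc : 0 < c)
    (x y : H) : ‖R x - R y‖ ≤ ‖x - y‖ := by
  have h := hA _ _ _ _ (hR x) (hR y)
  rw [← smul_sub, real_inner_smul_right,
    show x - R x - (y - R y) = (x - y) - (R x - R y) by abel, inner_sub_right,
    real_inner_self_eq_norm_mul_norm] at h
  have h' := nonneg_of_mul_nonneg_right h (one_div_pos.2 hc)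
  exact le_of_mul_self_le_mul (norm_nonneg _)
    (by linarith [real_inner_le_norm (R x - R y) (x - y)])

theorem apply_eq_of_zero_mem (hA : IsMonotoneOperator A) (hR : IsResolvent A c R) (hc : 0 < c)
    {p : H} (hp : 0 ∈ A p) : R p = p := by
  have h := hA _ _ _ _ (hR p) hp
  rw [sub_zero, real_inner_smul_right, ← neg_sub p (R p), inner_neg_left,
    real_inner_self_eq_norm_mul_norm] at h
  have : ‖p - R p‖ * ‖p - R p‖ ≤ 0 := by nlinarith [one_div_pos.2 hc]
  exact (sub_eq_zero.1 (norm_eq_zero.1 (mul_self_eq_zero.1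
    (le_antisymm this (mul_self_nonneg _))))).symm

theorem norm_apply_le (hA : IsMonotoneOperator A) (hR : IsResolvent A c R) (hc : 0 < c)
    {p : H} (hp : 0 ∈ A p) (x : H) : ‖R x‖ ≤ ‖x‖ + 2 * ‖p‖ := by
  have h := hR.norm_sub_le hA hc x p
  rw [hR.apply_eq_of_zero_mem hA hc hp] at h
  calc ‖R x‖ ≤ ‖R x - p‖ + ‖p‖ := norm_le_norm_sub_add _ _
    _ ≤ ‖x - p‖ + ‖p‖ := by gcongr
    _ ≤ ‖x‖ + 2 * ‖p‖ := by linarith [_root_.norm_sub_le x p]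

theorem norm_sub_le_of_isResolvent (hA : IsMonotoneOperator A) (hR : IsResolvent A c R)
    (hR' : IsResolvent A c' R') (hc : 0 < c) (hc' : 0 < c') (x : H) :
    ‖R' x - R x‖ ≤ |c' - c| / c * ‖x - R x‖ := by
  have h := hA _ _ _ _ (hR x) (hR' x)
  rw [inner_sub_right, real_inner_smul_right, real_inner_smul_right,
    show x - R' x = (x - R x) + (R x - R' x) by abel, inner_add_right,
    real_inner_self_eq_norm_mul_norm] at h
  have key : c * (‖R x - R' x‖ * ‖R x - R' x‖) ≤ (c' - c) * ⟪R x - R' x, x - R x⟫_ℝ := by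
    have := mul_le_mul_of_nonneg_left h (mul_pos hc hc').le
    field_simp at this
    nlinarith
  have hle : (c' - c) * ⟪R x - R' x, x - R x⟫_ℝ ≤ ‖R x - R' x‖ * (|c' - c| * ‖x - R x‖) := by
    calc (c' - c) * ⟪R x - R' x, x - R x⟫_ℝ ≤ |c' - c| * |⟪R x - R' x, x - R x⟫_ℝ| := by
          rw [← abs_mul]; exact le_abs_self _
      _ ≤ |c' - c| * (‖R x - R' x‖ * ‖x - R x‖) := by gcongr; exact abs_real_inner_le_norm _ _
      _ = _ := by ring
  rw [norm_sub_rev, div_mul_eq_mul_div, le_div_iff₀ hc]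
  exact le_of_mul_self_le_mul (by positivity) (by nlinarith)

end IsResolvent

def TendstoWeakly (y : ℕ → H) (z : H) : Prop :=
  ∀ w : H, Tendsto (fun k => ⟪y k, w⟫_ℝ) atTop (𝓝 ⟪z, w⟫_ℝ)

theorem TendstoWeakly.sub_tendsto_zero {y d : ℕ → H} {z : H} (hy : TendstoWeakly y z)
    (hd : Tendsto d atTop (𝓝 0)) : TendstoWeakly (fun k => y k - d k) z := fun w => by
  simpa [inner_sub_left] using
    (hy w).sub (((continuous_id.inner continuous_const).tendsto' 0 0 (inner_zero_left w)).comp hd)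

theorem TendstoWeakly.tendsto_inner {y b : ℕ → H} {z v : H} {M : ℝ} (hy : TendstoWeakly y z)
    (hyM : ∀ k, ‖y k‖ ≤ M) (hb : Tendsto b atTop (𝓝 v)) :
    Tendsto (fun k => ⟪y k, b k⟫_ℝ) atTop (𝓝 ⟪z, v⟫_ℝ) := by
  have hsmall : Tendsto (fun k => ⟪y k, b k - v⟫_ℝ) atTop (𝓝 0) := by
    refine squeeze_zero_norm (fun k => (norm_inner_le_norm _ _).trans
      (mul_le_mul_of_nonneg_right (hyM k) (norm_nonneg _))) ?_
    simpa using (tendsto_iff_norm_sub_tendsto_zero.1 hb).const_mul M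
  simpa [inner_sub_right] using hsmall.add (hy v)

theorem IsMonotoneOperator.zero_mem_of_tendstoWeakly {A : H → Set H} (hA : IsMonotoneOperator A)
    (hmax : ∀ x u : H, (∀ y v : H, v ∈ A y → 0 ≤ ⟪x - y, u - v⟫_ℝ) → u ∈ A x)
    {p q : ℕ → H} {z : H} {M : ℝ} (hp : TendstoWeakly p z) (hpM : ∀ k, ‖p k‖ ≤ M)
    (hq : Tendsto q atTop (𝓝 0)) (hqA : ∀ k, q k ∈ A (p k)) : 0 ∈ A z := by
  refine hmax z 0 fun y v hv => ?_
  have hlim : Tendsto (fun k => ⟪p k, q k - v⟫_ℝ - ⟪y, q k - v⟫_ℝ) atTop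
      (𝓝 (⟪z, 0 - v⟫_ℝ - ⟪y, 0 - v⟫_ℝ)) :=
    (hp.tendsto_inner hpM (hq.sub_const v)).sub
      ((continuous_const.inner continuous_id).tendsto _ |>.comp (hq.sub_const v))
  simp only [← inner_sub_left] at hlim
  exact ge_of_tendsto hlim (Eventually.of_forall fun k => hA _ _ _ _ (hqA k) hv)

theorem exists_wSeqClusterPt_of_norm_le [CompleteSpace H] {x : ℕ → H} {M : ℝ}
    (hM : ∀ k, ‖x k‖ ≤ M) : ∃ z, WSeqClusterPt x z := by
  set K := (Submodule.span ℝ (Set.range x)).topologicalClosure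
  have hxK : ∀ k, x k ∈ K := fun k =>
    Submodule.le_topologicalClosure _ (Submodule.subset_span ⟨k, rfl⟩)
  have : TopologicalSpace.SeparableSpace K :=
    ((Set.countable_range x).isSeparable.span (R := ℝ)).closure.separableSpace
  have : CompleteSpace K := (Submodule.isClosed_topologicalClosure _).completeSpace_coe
  let f : ℕ → StrongDual ℝ K := fun k => (innerSL ℝ (x k)).comp K.subtypeL
  have hf : ∀ k, StrongDual.toWeakDual (f k) ∈ WeakDual.toStrongDual ⁻¹' Metric.closedBall 0 M :=
    fun k => (dist_zero_right (f k)).trans_le <|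
      ContinuousLinearMap.opNorm_le_bound _ ((norm_nonneg _).trans (hM 0)) fun w =>
        (norm_inner_le_norm _ _).trans (mul_le_mul_of_nonneg_right (hM k) (norm_nonneg _))
  -- sequential Banach–Alaoglu on the separable space `K`, then Riesz representation on `H`
  obtain ⟨L, -, φ, hφ, hL⟩ := WeakDual.isSeqCompact_closedBall ℝ K 0 M hf
  refine ⟨(toDual ℝ H).symm ((WeakDual.toStrongDual L).comp K.orthogonalProjectionOnto), φ, hφ,
    fun w => ?_⟩
  have hproj : ∀ k, ⟪x k, w⟫_ℝ = f k (K.orthogonalProjectionOnto w) := fun k =>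
    (K.inner_orthogonalProjectionOnto_eq_of_mem_left ⟨x k, hxK k⟩ w).symm
  rw [toDual_symm_apply]
  simp only [hproj]
  exact ((WeakDual.eval_continuous (K.orthogonalProjectionOnto w)).tendsto _).comp hL

theorem norm_sub_succ_le {u : H} {f : ℕ → H} {α β γ : ℕ → ℝ} {T : ℕ → H → H} {x : ℕ → H}
    (hrec : ∀ k, x (k + 1) = α k • u + β k • x k + γ k • T k (x k) + f k)
    (hT : ∀ k y y', ‖T k y - T k y'‖ ≤ ‖y - y'‖) (k : ℕ) :
    ‖x (k + 2) - x (k + 1)‖ ≤ |γ (k + 1)| * ‖x (k + 1) - x k‖ + |α (k + 1) - α k| * ‖u‖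
      + (|β (k + 1)| * ‖x (k + 1)‖ + |β k| * ‖x k‖)
      + |γ (k + 1)| * ‖T (k + 1) (x k) - T k (x k)‖ + |γ (k + 1) - γ k| * ‖T k (x k)‖
      + (‖f (k + 1)‖ + ‖f k‖) := by
  have hdecomp : x (k + 2) - x (k + 1) =
      γ (k + 1) • (T (k + 1) (x (k + 1)) - T (k + 1) (x k)) + (α (k + 1) - α k) • u
      + (β (k + 1) • x (k + 1) - β k • x k) + γ (k + 1) • (T (k + 1) (x k) - T k (x k))
      + (γ (k + 1) - γ k) • T k (x k) + (f (k + 1) - f k) := by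
    rw [hrec (k + 1), hrec k]
    module
  have hsmul : ∀ (r : ℝ) (v : H), ‖r • v‖ = |r| * ‖v‖ := fun r v => by
    rw [norm_smul, Real.norm_eq_abs]
  have hβ : ‖β (k + 1) • x (k + 1) - β k • x k‖ ≤ |β (k + 1)| * ‖x (k + 1)‖ + |β k| * ‖x k‖ := by
    simpa only [hsmul] using norm_sub_le (β (k + 1) • x (k + 1)) (β k • x k)
  have hγ : ‖γ (k + 1) • (T (k + 1) (x (k + 1)) - T (k + 1) (x k))‖ ≤
      |γ (k + 1)| * ‖x (k + 1) - x k‖ := by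
    rw [hsmul]
    exact mul_le_mul_of_nonneg_left (hT _ _ _) (abs_nonneg _)
  rw [hdecomp]
  exact norm_add_le_of_le (norm_add_le_of_le (norm_add_le_of_le (norm_add_le_of_le
    (norm_add_le_of_le hγ (hsmul _ _).le) hβ) (hsmul _ _).le) (hsmul _ _).le) (norm_sub_le _ _)

section ProximalPoint

variable {A : H → Set H} {u : H} {f : ℕ → H} {c α β γ : ℕ → ℝ} {T : ℕ → H → H} {x : ℕ → H}
  {ε M M₂ : ℝ}

theorem norm_sub_succ_le_of_isResolvent (hA : IsMonotoneOperator A)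
    (hT : ∀ k, IsResolvent A (c k) (T k)) (hε : 0 < ε) (hεc : ∀ k, ε ≤ c k)
    (hrec : ∀ k, x (k + 1) = α k • u + β k • x k + γ k • T k (x k) + f k)
    (hxM : ∀ k, ‖x k‖ ≤ M) (hTM : ∀ k j, ‖T k (x j)‖ ≤ M₂) (hγ1 : ∀ k, |γ k| ≤ 1) (k : ℕ) :
    ‖x (k + 2) - x (k + 1)‖ ≤ |γ (k + 1)| * ‖x (k + 1) - x k‖ + |α (k + 1) - α k| * (‖u‖ + M₂)
      + ((|β (k + 1)| + |β k|) * M + |c (k + 1) - c k| / ε * (M + M₂)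
        + |(α (k + 1) + γ (k + 1)) - (α k + γ k)| * M₂ + (‖f (k + 1)‖ + ‖f k‖)) := by
  have hc : ∀ k, 0 < c k := fun k => hε.trans_le (hεc k)
  have hM₂ : 0 ≤ M₂ := (norm_nonneg _).trans (hTM 0 0)
  have hβ : |β (k + 1)| * ‖x (k + 1)‖ + |β k| * ‖x k‖ ≤ (|β (k + 1)| + |β k|) * M := by
    rw [add_mul]
    gcongr <;> apply hxM
  have hΔc : |γ (k + 1)| * ‖T (k + 1) (x k) - T k (x k)‖ ≤ |c (k + 1) - c k| / ε * (M + M₂) := by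
    calc |γ (k + 1)| * ‖T (k + 1) (x k) - T k (x k)‖
        ≤ 1 * (|c (k + 1) - c k| / c k * ‖x k - T k (x k)‖) := by
          gcongr
          · exact hγ1 _
          · exact (hT k).norm_sub_le_of_isResolvent hA (hT (k + 1)) (hc k) (hc (k + 1)) (x k)
      _ ≤ |c (k + 1) - c k| / ε * (M + M₂) := by
          rw [one_mul]
          gcongr
          · exact hεc k
          · exact (norm_sub_le _ _).trans (add_le_add (hxM k) (hTM k k))
  have hΔγ : |γ (k + 1) - γ k| * ‖T k (x k)‖ ≤
      (|(α (k + 1) + γ (k + 1)) - (α k + γ k)| + |α (k + 1) - α k|) * M₂ := by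
    gcongr
    · calc |γ (k + 1) - γ k|
          = |((α (k + 1) + γ (k + 1)) - (α k + γ k)) - (α (k + 1) - α k)| := by ring_nf
        _ ≤ _ := abs_sub _ _
    · exact hTM k k
  have := norm_sub_succ_le hrec (fun k => (hT k).norm_sub_le hA (hc k)) k
  linarith

theorem tendsto_norm_sub_succ_zero (hA : IsMonotoneOperator A)
    (hT : ∀ k, IsResolvent A (c k) (T k)) (hε : 0 < ε) (hεc : ∀ k, ε ≤ c k)
    (hrec : ∀ k, x (k + 1) = α k • u + β k • x k + γ k • T k (x k) + f k)
    (hxM : ∀ k, ‖x k‖ ≤ M) (hTM : ∀ k j, ‖T k (x j)‖ ≤ M₂)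
    (hαdiff : Summable (fun k => |α (k + 1) - α k|) ∨
      ((∀ k, |γ k| ≠ 1) ∧
        Tendsto (fun k => |α (k + 1) - α k| / (1 - |γ (k + 1)|)) atTop (𝓝 0)))
    (hγ1 : ∀ k, |γ k| ≤ 1)
    (hγdiv : Tendsto (fun n => ∑ k ∈ range n, (1 - |γ k|)) atTop atTop)
    (hαγdiff : Summable (fun k => |(α (k + 1) + γ (k + 1)) - (α k + γ k)|))
    (hβ : Summable (fun k => |β k|)) (hf : Summable (fun k => ‖f k‖))
    (hcdiff : Summable (fun k => |c (k + 1) - c k|)) :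
    Tendsto (fun k => ‖x (k + 1) - x k‖) atTop (𝓝 0) := by
  set σ : ℕ → ℝ := fun k => (|β (k + 1)| + |β k|) * M + |c (k + 1) - c k| / ε * (M + M₂)
    + |(α (k + 1) + γ (k + 1)) - (α k + γ k)| * M₂ + (‖f (k + 1)‖ + ‖f k‖)
  have hM : 0 ≤ M := (norm_nonneg _).trans (hxM 0)
  have hM₂ : 0 ≤ M₂ := (norm_nonneg _).trans (hTM 0 0)
  have hσ0 : ∀ k, 0 ≤ σ k := fun k => by positivity
  have hσ : Summable σ :=
    (((((summable_nat_add_iff 1).2 hβ).add hβ).mul_right M).add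
      ((hcdiff.div_const ε).mul_right (M + M₂))).add (hαγdiff.mul_right M₂) |>.add
      (((summable_nat_add_iff 1).2 hf).add hf)
  have hdiv : Tendsto (fun n => ∑ k ∈ range n, (1 - |γ (k + 1)|)) atTop atTop := by
    refine (tendsto_atTop_add_const_right _ (-(1 - |γ 0|))
      ((tendsto_add_atTop_iff_nat 1).2 hγdiv)).congr fun n => ?_
    rw [sum_range_succ']
    ring
  have hstep := norm_sub_succ_le_of_isResolvent hA hT hε hεc hrec hxM hTM hγ1
  have hq0 : ∀ k, 0 ≤ |γ (k + 1)| := fun k => abs_nonneg _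
  have hq1 : ∀ k, |γ (k + 1)| ≤ 1 := fun k => hγ1 (k + 1)
  rcases hαdiff with hα | ⟨hγne, hα⟩
  · refine tendsto_zero_of_le_mul_add (t := 0) (fun k => norm_nonneg _) hq0 hq1
      (fun k => add_nonneg (hσ0 k) (by positivity)) (fun k => ?_) hdiv tendsto_const_nhds
      (hσ.add (hα.mul_right (‖u‖ + M₂)))
    simp only [Pi.zero_apply, mul_zero, add_zero]
    linarith [hstep k]
  · have hq : ∀ k, 0 < 1 - |γ (k + 1)| := fun k => sub_pos.2 ((hγ1 _).lt_of_ne (hγne _))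
    refine tendsto_zero_of_le_mul_add (fun k => norm_nonneg _) hq0 hq1 hσ0 (fun k => ?_) hdiv
      (by simpa using hα.mul_const (‖u‖ + M₂)) hσ
    have hcancel : (1 - |γ (k + 1)|) * (|α (k + 1) - α k| / (1 - |γ (k + 1)|) * (‖u‖ + M₂))
        = |α (k + 1) - α k| * (‖u‖ + M₂) := by
      field_simp [(hq k).ne']
    linarith [hstep k]

theorem tendsto_sub_apply_zero_of_tendsto_sub_succ
    (hrec : ∀ k, x (k + 1) = α k • u + β k • x k + γ k • T k (x k) + f k)
    (hxM : ∀ k, ‖x k‖ ≤ M) (hx : Tendsto (fun k => x (k + 1) - x k) atTop (𝓝 0))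
    (hα : Tendsto α atTop (𝓝 0)) (hβ : Tendsto β atTop (𝓝 0)) (hγ : Tendsto γ atTop (𝓝 1))
    (hf : Tendsto f atTop (𝓝 0)) :
    Tendsto (fun k => x k - T k (x k)) atTop (𝓝 0) := by
  have hγd : Tendsto (fun k => γ k • (x k - T k (x k))) atTop (𝓝 0) := by
    have hid : ∀ k, γ k • (x k - T k (x k))
        = α k • u + f k + (β k + γ k - 1) • x k - (x (k + 1) - x k) := fun k => by
      rw [hrec k]; module
    have hx' : Tendsto (fun k => (β k + γ k - 1) • x k) atTop (𝓝 0) :=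
      Tendsto.zero_smul_isBoundedUnder_le (by simpa using (hβ.add hγ).sub_const 1)
        (isBoundedUnder_of ⟨M, hxM⟩)
    simpa [hid] using (((hα.smul_const u).add hf).add hx').sub hx
  refine (by simpa using (hγ.inv₀ one_ne_zero).smul hγd :
    Tendsto (fun k => (γ k)⁻¹ • γ k • (x k - T k (x k))) atTop (𝓝 0)).congr' ?_
  filter_upwards [hγ.eventually_ne one_ne_zero] with k hk
  rw [inv_smul_smul₀ hk]

theorem zero_mem_of_tendstoWeakly_of_isResolvent (hA : IsMonotoneOperator A)
    (hmax : ∀ x u : H, (∀ y v : H, v ∈ A y → 0 ≤ ⟪x - y, u - v⟫_ℝ) → u ∈ A x)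
    (hT : ∀ k, IsResolvent A (c k) (T k)) (hε : 0 < ε) (hεc : ∀ k, ε ≤ c k) {y : ℕ → H} {z : H}
    (hy : TendstoWeakly y z) (hTM : ∀ k, ‖T k (y k)‖ ≤ M₂)
    (hd : Tendsto (fun k => y k - T k (y k)) atTop (𝓝 0)) : 0 ∈ A z := by
  have hc : IsBoundedUnder (· ≤ ·) atTop (fun k => ‖1 / c k‖) :=
    isBoundedUnder_of ⟨1 / ε, fun k => by
      rw [Real.norm_of_nonneg (one_div_pos.2 (hε.trans_le (hεc k))).le]
      exact one_div_le_one_div_of_le hε (hεc k)⟩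
  have hTy : TendstoWeakly (fun k => T k (y k)) z := by
    simpa only [sub_sub_cancel] using hy.sub_tendsto_zero hd
  exact hA.zero_mem_of_tendstoWeakly hmax hTy hTM (hc.smul_tendsto_zero hd) fun k => hT k (y k)

end ProximalPoint

end MonotoneOperators

/-- Proposition 3.10: under the stated parameter conditions, `x_k - J_{c_k}(x_k) → 0` and
the set of weak sequential cluster points of `(x_k)` is nonempty and contained in
`zer A`. -/
theorem stmt14 {H : Type*} [NormedAddCommGroup H] [InnerProductSpace ℝ H] [CompleteSpace H]
    (A : H → Set H)
    (hmono : ∀ x y xu yv : H, xu ∈ A x → yv ∈ A y → 0 ≤ ⟪x - y, xu - yv⟫_ℝ)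
    (hmax : ∀ x xu : H, (∀ y yv : H, yv ∈ A y → 0 ≤ ⟪x - y, xu - yv⟫_ℝ) → xu ∈ A x)
    (J : ℝ → H → H)
    (hJ : ∀ c : ℝ, 0 < c → ∀ x : H, (1 / c) • (x - J c x) ∈ A (J c x))
    (u : H) (e : ℕ → H) (c α β γ δ : ℕ → ℝ) (hc : ∀ k, 0 < c k)
    (x : ℕ → H)
    (hrec : ∀ k, x (k + 1) = α k • u + β k • x k + γ k • J (c k) (x k) + δ k • e k)
    (hzer : ∃ p : H, (0 : H) ∈ A p)
    (hxbdd : Bornology.IsBounded (Set.range x))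
    (hαdiff : Summable (fun k => |α (k + 1) - α k|) ∨
      ((∀ k, |γ k| ≠ 1) ∧
        Tendsto (fun k => |α (k + 1) - α k| / (1 - |γ (k + 1)|)) atTop (nhds 0)))
    (hγ1 : ∀ k, |γ k| ≤ 1)
    (hαγ1 : Tendsto (fun k => α k + γ k) atTop (nhds 1))
    (hγdiv : Tendsto (fun n => ∑ k ∈ Finset.range n, (1 - |γ k|)) atTop atTop)
    (hαγdiff : Summable (fun k => |(α (k + 1) + γ (k + 1)) - (α k + γ k)|))
    (hα0 : Tendsto α atTop (nhds 0))
    (hβsum : Summable (fun k => |β k|))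
    (hdesum : Summable (fun k => ‖δ k • e k‖))
    (hcinf : ∃ ε > (0 : ℝ), ∀ k, ε ≤ c k)
    (hcsum : Summable (fun k => |c (k + 1) - c k|)) :
    Tendsto (fun k => x k - J (c k) (x k)) atTop (nhds (0 : H)) ∧
      (∃ z : H, WSeqClusterPt x z) ∧
      ∀ z : H, WSeqClusterPt x z → (0 : H) ∈ A z := by
  obtain ⟨p, hp⟩ := hzer
  obtain ⟨ε, hε, hεc⟩ := hcinf
  obtain ⟨M, hM⟩ := hxbdd.exists_norm_le
  have hxM : ∀ k, ‖x k‖ ≤ M := fun k => hM _ ⟨k, rfl⟩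
  have hT : ∀ k, IsResolvent A (c k) (J (c k)) := fun k => hJ _ (hc k)
  have hTM : ∀ k j, ‖J (c k) (x j)‖ ≤ M + 2 * ‖p‖ := fun k j =>
    ((hT k).norm_apply_le hmono (hc k) hp _).trans (by linarith [hxM j])
  have hreg := tendsto_norm_sub_succ_zero hmono hT hε hεc hrec hxM hTM hαdiff hγ1 hγdiv hαγdiff
    hβsum hdesum hcsum
  have hres : Tendsto (fun k => x k - J (c k) (x k)) atTop (𝓝 0) :=
    tendsto_sub_apply_zero_of_tendsto_sub_succ hrec hxM (tendsto_zero_iff_norm_tendsto_zero.2 hreg)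
      hα0 (tendsto_zero_iff_norm_tendsto_zero.2 hβsum.tendsto_atTop_zero)
      (by simpa using hαγ1.sub hα0) (tendsto_zero_iff_norm_tendsto_zero.2 hdesum.tendsto_atTop_zero)
  refine ⟨hres, exists_wSeqClusterPt_of_norm_le hxM, ?_⟩
  rintro z ⟨φ, hφ, hz⟩
  exact zero_mem_of_tendstoWeakly_of_isResolvent hmono hmax (fun k => hT (φ k)) hε
    (fun k => hεc (φ k)) hz (fun k => hTM _ _) (hres.comp hφ.tendsto_atTop)
end
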